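/- arXiv:1512.06645 — 3 statements merged into one kernel-verified Lean document; each statement's English description precedes it below -/
import Mathlib

section
/- Fix K ≥ 1, positive reals σ₁², ..., σ_K², and Λ, Γ > 0. Consider the minimax value V = min over nonnegative (Λ₁,...,Λ_K) with Λ₁+⋯+Λ_K ≤ Λ of max over k of (1/2)·log(1 + Γ/(σ_k² + Λ_k)). Let c be the unique constant such that the waterfilling choice Λ_k* = max(c - σ_k², 0) satisfies Σ_k Λ_k* = Λ. Then V = (1/2)·log(1 + Γ/c). -/
/-!
Any allocation of total power at most `∑ₖ max (c - σₖ) 0` leaves some channel with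
`σₖ + Λₖ ≤ c`: otherwise each `Λₖ` exceeds its waterfilling share, strictly on a channel
under water. Since the rate `f` decreases in the effective noise, that channel alone gives a rate
`≥ f c`. The waterfilling allocation itself raises every effective noise to `max c σₖ`, equal
to `c` on the channels under water, so its best rate is exactly `f c`.
-/

open Finset Set

section Waterfilling

variable {ι : Type*} [Fintype ι] {σ L : ι → ℝ} {c : ℝ}

lemma exists_lt_of_sum_max_sub_pos (h : 0 < ∑ k, max (c - σ k) 0) : ∃ k, σ k < c := by
  obtain ⟨k, -, hk⟩ := exists_lt_of_sum_lt (by simpa using h : ∑ _k : ι, (0 : ℝ) < _)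
  exact ⟨k, by simpa using hk⟩

lemma exists_add_le_of_sum_le_sum_max_sub (hL : ∀ k, 0 ≤ L k) {k₀ : ι} (hk₀ : σ k₀ < c)
    (hsum : ∑ k, L k ≤ ∑ k, max (c - σ k) 0) : ∃ k, σ k + L k ≤ c := by
  by_contra! hlt
  have : ∑ k, max (c - σ k) 0 < ∑ k, L k :=
    sum_lt_sum (fun k _ => max_le (by linarith [hlt k]) (hL k))
      ⟨k₀, mem_univ _, by rw [max_eq_left (by linarith)]; linarith [hlt k₀]⟩
  linarith

lemma add_max_sub_self_zero (s c : ℝ) : s + max (c - s) 0 = max c s := by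
  rw [add_max]; simp

theorem isLeast_iSup_waterfilling {f : ℝ → ℝ} (hf : AntitoneOn f (Ioi 0)) (hσ : ∀ k, 0 < σ k)
    (hc : 0 < ∑ k, max (c - σ k) 0) :
    IsLeast {v | ∃ L : ι → ℝ, (∀ k, 0 ≤ L k) ∧ ∑ k, L k ≤ ∑ k, max (c - σ k) 0 ∧
      v = ⨆ k, f (σ k + L k)} (f c) := by
  obtain ⟨k₀, hk₀⟩ := exists_lt_of_sum_max_sub_pos hc
  have hc₀ : 0 < c := (hσ k₀).trans hk₀
  refine ⟨⟨fun k => max (c - σ k) 0, fun k => le_max_right _ _, le_rfl, ?_⟩, ?_⟩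
  · simp only [add_max_sub_self_zero]
    have : Nonempty ι := ⟨k₀⟩
    refine le_antisymm ?_ (ciSup_le fun k => hf hc₀ (hc₀.trans_le (le_max_left _ _))
      (le_max_left _ _))
    exact le_ciSup_of_le (Finite.bddAbove_range _) k₀ (by rw [max_eq_left hk₀.le])
  · rintro v ⟨L, hL, hsum, rfl⟩
    obtain ⟨k, hk⟩ := exists_add_le_of_sum_le_sum_max_sub hL hk₀ hsum
    exact le_ciSup_of_le (Finite.bddAbove_range _) k
      (hf (add_pos_of_pos_of_nonneg (hσ k) (hL k)) hc₀ hk)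

end Waterfilling

lemma antitoneOn_half_log_one_add_div {Γ : ℝ} (hΓ : 0 ≤ Γ) :
    AntitoneOn (fun x => (1 / 2) * Real.log (1 + Γ / x)) (Ioi 0) := by
  intro a (ha : 0 < a) b (hb : 0 < b) hab
  dsimp only
  gcongr

theorem stmt3_general {K : ℕ} (σ : Fin K → ℝ) (hσ : ∀ k, 0 < σ k)
    (Λ Γ : ℝ) (hΛ : 0 < Λ) (hΓ : 0 < Γ)
    (c : ℝ) (hc : ∑ k, max (c - σ k) 0 = Λ) :
    sInf {v : ℝ | ∃ L : Fin K → ℝ, (∀ k, 0 ≤ L k) ∧ (∑ k, L k) ≤ Λ ∧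
        v = ⨆ k : Fin K, (1 / 2) * Real.log (1 + Γ / (σ k + L k))} =
      (1 / 2) * Real.log (1 + Γ / c) := by
  subst hc
  exact (isLeast_iSup_waterfilling (antitoneOn_half_log_one_add_div hΓ.le) hσ hΛ).csInf_eq

/-- The jammer's minimax power-allocation problem: the minimum over nonnegative
allocations `Λ₁ + ⋯ + Λ_K ≤ Λ` of the best single-subchannel rate
`max_k (1/2)·log(1 + Γ/(σ_k² + Λ_k))` equals `(1/2)·log(1 + Γ/c)`, where `c` is the
waterfilling level with `∑_k max(c - σ_k², 0) = Λ`. -/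
theorem stmt3 {K : ℕ} (hK : 0 < K) (σ : Fin K → ℝ) (hσ : ∀ k, 0 < σ k)
    (Λ Γ : ℝ) (hΛ : 0 < Λ) (hΓ : 0 < Γ)
    (c : ℝ) (hc : ∑ k, max (c - σ k) 0 = Λ) :
    sInf {v : ℝ | ∃ L : Fin K → ℝ, (∀ k, 0 ≤ L k) ∧ (∑ k, L k) ≤ Λ ∧
        v = ⨆ k : Fin K, (1 / 2) * Real.log (1 + Γ / (σ k + L k))} =
      (1 / 2) * Real.log (1 + Γ / c) :=
  stmt3_general σ hσ Λ Γ hΛ hΓ c hc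
end

section
/- Let (X, κ) be a random pair with X real-valued, κ ∈ {1,...,K}, E[X²] = Γ, and for each k the conditional distribution of X given κ = k symmetric about 0. Let Z : ℝ × {1,...,K} → ℝ^K assign to each (x', k') a random vector Z_{x',k'} with finite second moments, and suppose the symmetrization identity x·e_k + E[Z_{x',k'}] = x'·e_{k'} + E[Z_{x,k}] holds for all pairs (x,k), (x',k') in the support, where e_k is the k-th standard basis vector of ℝ^K. Then for every (x',k') in the support, E[‖Z_{X,κ}‖²] ≥ Γ. -/
open MeasureTheory
open scoped BigOperators

/-!
The symmetrization identity says that the mean of `Z_{x,k}` is `x • e_k + c` for one vector `c`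
on the whole support. Restricting to the `k`-th coordinate and using Jensen,
`E‖Z_{x,k}‖² ≥ ‖E Z_{x,k}‖² ≥ (x + c_k)²`. Averaging over `(X, κ)`, the cross term
`E[X c_κ]` vanishes because `X` is conditionally symmetric, so the bound is at least `E[X²] = Γ`.
-/

section Jensen

variable {α : Type*} [MeasurableSpace α] {μ : Measure α}

theorem memLp_two_of_nonneg_of_integrable_sq {f : α → ℝ} (hf : 0 ≤ f)
    (hf2 : Integrable (fun a => f a ^ 2) μ) : MemLp f 2 μ := by
  have hmeas : AEStronglyMeasurable f μ := by
    have : f = fun a => √(f a ^ 2) := funext fun a => (Real.sqrt_sq (hf a)).symm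
    rw [this]
    exact Real.continuous_sqrt.comp_aestronglyMeasurable hf2.aestronglyMeasurable
  exact (memLp_two_iff_integrable_sq hmeas).2 hf2

variable [IsProbabilityMeasure μ]

theorem sq_integral_le_integral_sq {f : α → ℝ} (hf : MemLp f 2 μ) :
    (∫ a, f a ∂μ) ^ 2 ≤ ∫ a, f a ^ 2 ∂μ := by
  have h := ProbabilityTheory.variance_nonneg f μ
  rw [ProbabilityTheory.variance_eq_sub hf] at h
  simpa only [Pi.pow_apply, sub_nonneg] using h

theorem sq_norm_integral_le_integral_sq_norm {E : Type*} [NormedAddCommGroup E]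
    [NormedSpace ℝ E] {f : α → E} (hf2 : Integrable (fun a => ‖f a‖ ^ 2) μ) :
    ‖∫ a, f a ∂μ‖ ^ 2 ≤ ∫ a, ‖f a‖ ^ 2 ∂μ :=
  calc ‖∫ a, f a ∂μ‖ ^ 2 ≤ (∫ a, ‖f a‖ ∂μ) ^ 2 := by
        gcongr; exact norm_integral_le_integral_norm f
    _ ≤ ∫ a, ‖f a‖ ^ 2 ∂μ := sq_integral_le_integral_sq
        (memLp_two_of_nonneg_of_integrable_sq (fun a => norm_nonneg _) hf2)

end Jensen

theorem exists_eq_add_const_of_add_eq_add_swap {α G : Type*} [AddCommGroup G] {s : Set α}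
    {f g : α → G} (h : ∀ a ∈ s, ∀ b ∈ s, f a + g b = f b + g a) :
    ∃ c, ∀ a ∈ s, g a = f a + c := by
  rcases s.eq_empty_or_nonempty with rfl | ⟨b, hb⟩
  · exact ⟨0, by simp⟩
  · refine ⟨g b - f b, fun a ha => ?_⟩
    rw [add_sub_assoc', eq_sub_iff_add_eq, h a ha b hb, add_comm]

theorem Finset.sum_eq_zero_of_comp_equiv_eq_neg {α G : Type*} [AddCommGroup G] [IsAddTorsionFree G]
    {s : Finset α} {F : α → G} (e : α ≃ α) (hF : ∀ a, F (e a) = -F a)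
    (hs : Function.support F ⊆ s) : ∑ a ∈ s, F a = 0 := by
  rw [← finsum_eq_sum_of_support_subset F hs, ← self_eq_neg]
  calc ∑ᶠ a, F a = ∑ᶠ a, F (e a) := (finsum_comp_equiv e).symm
    _ = -∑ᶠ a, F a := by simp only [hF, finsum_neg_distrib]

theorem sum_mul_sq_le_sum_mul_sq_add {β : Type*} {S : Finset (ℝ × β)} {p : ℝ × β → ℝ}
    (hp0 : ∀ x, 0 ≤ p x) (hsupp : ∀ x ∉ S, p x = 0) (hsym : ∀ x k, p (x, k) = p (-x, k))
    (a : β → ℝ) :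
    ∑ xk ∈ S, p xk * xk.1 ^ 2 ≤ ∑ xk ∈ S, p xk * (xk.1 + a xk.2) ^ 2 := by
  have hcross : ∑ xk ∈ S, p xk * (xk.1 * a xk.2) = 0 := by
    refine Finset.sum_eq_zero_of_comp_equiv_eq_neg ((Equiv.neg ℝ).prodCongr (Equiv.refl β))
      (fun ⟨x, k⟩ => ?_) (fun xk hxk => ?_)
    · change p (-x, k) * (-x * a k) = -(p (x, k) * (x * a k))
      rw [← hsym]
      ring
    · by_contra h
      exact hxk (by simp [hsupp xk h])
  have hexpand : ∑ xk ∈ S, p xk * (xk.1 + a xk.2) ^ 2 = ∑ xk ∈ S, p xk * xk.1 ^ 2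
      + 2 * ∑ xk ∈ S, p xk * (xk.1 * a xk.2) + ∑ xk ∈ S, p xk * a xk.2 ^ 2 := by
    rw [Finset.mul_sum, ← Finset.sum_add_distrib, ← Finset.sum_add_distrib]
    exact Finset.sum_congr rfl fun xk _ => by ring
  have hrest : 0 ≤ ∑ xk ∈ S, p xk * a xk.2 ^ 2 :=
    Finset.sum_nonneg fun xk _ => mul_nonneg (hp0 xk) (sq_nonneg _)
  linarith

theorem stmt9_general {Ω' : Type*} [MeasurableSpace Ω'] (ν : Measure Ω') [IsProbabilityMeasure ν]
    {K : ℕ}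
    (S : Finset (ℝ × Fin K)) (p : ℝ × Fin K → ℝ)
    (hp0 : ∀ x, 0 ≤ p x) (hsupp : ∀ x ∉ S, p x = 0)
    (Γ : ℝ) (hΓ : ∑ x ∈ S, p x * x.1 ^ 2 = Γ)
    (hsym : ∀ (x : ℝ) (k : Fin K), p (x, k) = p (-x, k))
    (Z : ℝ × Fin K → Ω' → EuclideanSpace ℝ (Fin K))
    (hZ2 : ∀ xk, Integrable (fun ω => ‖Z xk ω‖ ^ 2) ν)
    (hsymmetrize : ∀ (x : ℝ) (k : Fin K) (x' : ℝ) (k' : Fin K),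
      p (x, k) ≠ 0 → p (x', k') ≠ 0 →
      x • (EuclideanSpace.single k (1 : ℝ)) + ∫ ω, Z (x', k') ω ∂ν =
        x' • (EuclideanSpace.single k' (1 : ℝ)) + ∫ ω, Z (x, k) ω ∂ν) :
    ∑ xk ∈ S, p xk * ∫ ω, ‖Z xk ω‖ ^ 2 ∂ν ≥ Γ := by
  obtain ⟨c, hc⟩ := exists_eq_add_const_of_add_eq_add_swap
    (s := {xk | p xk ≠ 0}) (f := fun xk => xk.1 • EuclideanSpace.single xk.2 (1 : ℝ))
    (g := fun xk => ∫ ω, Z xk ω ∂ν) fun a ha b hb => hsymmetrize a.1 a.2 b.1 b.2 ha hb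
  have hmean : ∀ xk, p xk ≠ 0 → (xk.1 + c xk.2) ^ 2 ≤ ∫ ω, ‖Z xk ω‖ ^ 2 ∂ν := fun xk hxk =>
    calc (xk.1 + c xk.2) ^ 2 = ‖(∫ ω, Z xk ω ∂ν) xk.2‖ ^ 2 := by
          simp [hc xk hxk]
      _ ≤ ‖∫ ω, Z xk ω ∂ν‖ ^ 2 := by gcongr; exact PiLp.norm_apply_le _ _
      _ ≤ ∫ ω, ‖Z xk ω‖ ^ 2 ∂ν := sq_norm_integral_le_integral_sq_norm (hZ2 xk)
  rw [ge_iff_le, ← hΓ]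
  calc ∑ xk ∈ S, p xk * xk.1 ^ 2 ≤ ∑ xk ∈ S, p xk * (xk.1 + c xk.2) ^ 2 :=
        sum_mul_sq_le_sum_mul_sq_add hp0 hsupp hsym c
    _ ≤ ∑ xk ∈ S, p xk * ∫ ω, ‖Z xk ω‖ ^ 2 ∂ν := by
        refine Finset.sum_le_sum fun xk _ => ?_
        rcases eq_or_ne (p xk) 0 with h | h
        · simp [h]
        · exact mul_le_mul_of_nonneg_left (hmean xk h) (hp0 xk)

/-- Core nonsymmetrizability estimate (direct part of Theorem 1): let `(X, κ)` be a
finitely supported random pair with pmf `p` on `ℝ × {1,…,K}`, `E[X²] = Γ`, and each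
conditional distribution of `X` given `κ = k` symmetric about `0`. If the random vectors
`Z_{x,k}` in `ℝ^K` satisfy the symmetrization identity
`x·e_k + E[Z_{x',k'}] = x'·e_{k'} + E[Z_{x,k}]` for all pairs in the support of `p`,
then the mean jammer power satisfies `E[‖Z_{X,κ}‖²] ≥ Γ`. -/
theorem stmt9 {Ω' : Type*} [MeasurableSpace Ω'] (ν : Measure Ω') [IsProbabilityMeasure ν]
    {K : ℕ} (hK : 0 < K)
    (S : Finset (ℝ × Fin K)) (p : ℝ × Fin K → ℝ)
    (hp0 : ∀ x, 0 ≤ p x) (hsupp : ∀ x ∉ S, p x = 0) (hp1 : ∑ x ∈ S, p x = 1)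
    (Γ : ℝ) (hΓ : ∑ x ∈ S, p x * x.1 ^ 2 = Γ)
    (hsym : ∀ (x : ℝ) (k : Fin K), p (x, k) = p (-x, k))
    (Z : ℝ × Fin K → Ω' → EuclideanSpace ℝ (Fin K))
    (hZint : ∀ xk, Integrable (Z xk) ν)
    (hZ2 : ∀ xk, Integrable (fun ω => ‖Z xk ω‖ ^ 2) ν)
    (hsymmetrize : ∀ (x : ℝ) (k : Fin K) (x' : ℝ) (k' : Fin K),
      p (x, k) ≠ 0 → p (x', k') ≠ 0 →
      x • (EuclideanSpace.single k (1 : ℝ)) + ∫ ω, Z (x', k') ω ∂ν =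
        x' • (EuclideanSpace.single k' (1 : ℝ)) + ∫ ω, Z (x, k) ω ∂ν) :
    ∑ xk ∈ S, p xk * ∫ ω, ‖Z xk ω‖ ^ 2 ∂ν ≥ Γ :=
  stmt9_general ν S p hp0 hsupp Γ hΓ hsym Z hZ2 hsymmetrize
end

section
/- Let Λ₁,...,Λ_K ≥ 0 with Σ Λ_k = Λ be arbitrary, let Λ₁*,...,Λ_K* be the waterfilling allocation at level c (Λ_k* = max(c − σ_k², 0), Σ Λ_k* = Λ). Then max_k (1/2)log(1 + Γ/(σ_k² + Λ_k)) ≥ (1/2)log(1 + Γ/c), i.e., against any non-waterfilling jammer allocation the sender can find a subchannel at least as good as the water level c. -/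
open scoped BigOperators

/-- Otherwise `L k ≥ max (c - σ k) 0` everywhere, strictly where `L k > 0`, and the totals differ. -/
theorem exists_add_le_of_sum_max_sub_eq {ι : Type*} [Fintype ι] (σ L : ι → ℝ) (c : ℝ)
    (hL0 : ∀ k, 0 ≤ L k) (hsum : ∑ k, max (c - σ k) 0 = ∑ k, L k) (hpos : 0 < ∑ k, L k) :
    ∃ k, σ k + L k ≤ c := by
  by_contra! hgt
  obtain ⟨k₀, -, hk₀⟩ := Finset.exists_lt_of_sum_lt (s := Finset.univ) (f := fun _ => (0 : ℝ))
    (by simpa using hpos)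
  have hlt : ∑ k, max (c - σ k) 0 < ∑ k, L k :=
    Finset.sum_lt_sum (fun k _ => max_le (by linarith [hgt k]) (hL0 k))
      ⟨k₀, Finset.mem_univ _, max_lt (by linarith [hgt k₀]) hk₀⟩
  exact hlt.ne hsum

theorem stmt17_general {K : ℕ} (σ : Fin K → ℝ) (hσ : ∀ k, 0 < σ k)
    (Λ Γ : ℝ) (hΛ : 0 < Λ) (hΓ : 0 < Γ)
    (c : ℝ) (hwf : ∑ k, max (c - σ k) 0 = Λ)
    (L : Fin K → ℝ) (hL0 : ∀ k, 0 ≤ L k) (hLsum : ∑ k, L k = Λ) :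
    (1 / 2) * Real.log (1 + Γ / c) ≤
      ⨆ k : Fin K, (1 / 2) * Real.log (1 + Γ / (σ k + L k)) := by
  obtain ⟨k, hk⟩ := exists_add_le_of_sum_max_sub_eq σ L c hL0 (hwf.trans hLsum.symm)
    (hLsum ▸ hΛ)
  have hnoise : 0 < σ k + L k := add_pos_of_pos_of_nonneg (hσ k) (hL0 k)
  have hc : 0 < c := hnoise.trans_le hk
  calc (1 / 2) * Real.log (1 + Γ / c)
      ≤ (1 / 2) * Real.log (1 + Γ / (σ k + L k)) := by gcongr
    _ ≤ ⨆ k : Fin K, (1 / 2) * Real.log (1 + Γ / (σ k + L k)) :=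
      le_ciSup (f := fun k => (1 / 2) * Real.log (1 + Γ / (σ k + L k)))
        (Finite.bddAbove_range _) k

/-- Against any jammer power allocation `Λ₁ + ⋯ + Λ_K = Λ`, the sender can find a
subchannel achieving at least the waterfilling rate: if `c` is the waterfilling level
with `∑_k max(c − σ_k², 0) = Λ`, then
`max_k (1/2)log(1 + Γ/(σ_k² + Λ_k)) ≥ (1/2)log(1 + Γ/c)`. -/
theorem stmt17 {K : ℕ} (hK : 0 < K) (σ : Fin K → ℝ) (hσ : ∀ k, 0 < σ k)
    (Λ Γ : ℝ) (hΛ : 0 < Λ) (hΓ : 0 < Γ)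
    (c : ℝ) (hwf : ∑ k, max (c - σ k) 0 = Λ)
    (L : Fin K → ℝ) (hL0 : ∀ k, 0 ≤ L k) (hLsum : ∑ k, L k = Λ) :
    (1 / 2) * Real.log (1 + Γ / c) ≤
      ⨆ k : Fin K, (1 / 2) * Real.log (1 + Γ / (σ k + L k)) :=
  stmt17_general σ hσ Λ Γ hΛ hΓ c hwf L hL0 hLsum
end
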